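/- For all nonnegative integers m, ∑_{k=0}^{2m} (-2)^k C(2m,k) · k · H_k = 4m(2H_{2m} - H_m), where H_j is the j-th harmonic number. -/

import Mathlib

open Finset

noncomputable def H (n : ℕ) : ℝ := ∑ i ∈ Finset.range n, (1:ℝ)/(i+1)

/-!
With `f x n = ∑ₖ C(n,k) xᵏ H_k`, the identities `k C(n+1,k) = (n+1) C(n,k-1)` and
`C(n+1,k) - C(n,k) = C(n,k-1)` turn the weighted sum `∑ₖ C(n+1,k) xᵏ k H_k` into
`(n+1) (f x (n+1) - f x n)`. Pascal's rule together with `H_{k+1} = H_k + 1/(k+1)` gives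
`f x (n+1) = (1+x) f x n + ((1+x)^(n+1) - 1)/(n+1)`. At `x = -2` the factor `1+x = -1` makes this
`f(2m) = -f(2m-1)`, so the sum is `4m f(2m)`, and an induction over pairs of steps yields
`f(2m) = 2 H_{2m} - H_m`.
-/

section BinomialSums

variable {R : Type*} [CommRing R]

theorem sum_range_succ_choose_mul (a : ℕ → R) (n : ℕ) :
    ∑ k ∈ range (n + 2), ((n + 1).choose k : R) * a k
      = ∑ k ∈ range (n + 1), (n.choose k : R) * (a k + a (k + 1)) := by
  have shifted : ∑ k ∈ range (n + 2), (n.choose k : R) * a k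
      = ∑ k ∈ range (n + 1), (n.choose k : R) * a k := by
    simp [sum_range_succ _ (n + 1)]
  rw [sum_range_succ']
  simp only [mul_add, sum_add_distrib]
  rw [← shifted, sum_range_succ' (fun k => (n.choose k : R) * a k)]
  simp only [Nat.choose_succ_succ, Nat.cast_add, add_mul, sum_add_distrib, Nat.choose_zero_right]
  ring

theorem sum_range_succ_choose_mul_cast_mul (a : ℕ → R) (n : ℕ) :
    ∑ k ∈ range (n + 2), ((n + 1).choose k : R) * k * a k
      = (n + 1) * ∑ k ∈ range (n + 1), (n.choose k : R) * a (k + 1) := by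
  rw [sum_range_succ', mul_sum]
  simp only [Nat.cast_zero, mul_zero, zero_mul, add_zero]
  refine sum_congr rfl fun k _ => ?_
  have h := congrArg (Nat.cast : ℕ → R) (Nat.add_one_mul_choose_eq n k)
  push_cast at h ⊢
  linear_combination -a (k + 1) * h

end BinomialSums

theorem mul_sum_range_choose_mul_pow_div_succ {K : Type*} [Field K] [CharZero K] (x : K) (n : ℕ) :
    x * ∑ k ∈ range (n + 1), (n.choose k : K) * x ^ k / (k + 1)
      = ((1 + x) ^ (n + 1) - 1) / (n + 1) := by
  have hbinom : (1 + x) ^ (n + 1) - 1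
      = ∑ k ∈ range (n + 1), ((n + 1).choose (k + 1) : K) * x ^ (k + 1) := by
    rw [add_comm, add_pow, sum_range_succ']
    simp [mul_comm]
  rw [hbinom, eq_div_iff (Nat.cast_add_one_ne_zero n), mul_sum, sum_mul]
  refine sum_congr rfl fun k _ => ?_
  have hk : (k : K) + 1 ≠ 0 := Nat.cast_add_one_ne_zero k
  have h := congrArg (Nat.cast : ℕ → K) (Nat.add_one_mul_choose_eq n k)
  push_cast at h
  field_simp
  linear_combination x ^ (k + 1) * h

theorem H_succ (n : ℕ) : H (n + 1) = H n + 1 / (n + 1) := by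
  simp [H, sum_range_succ]

noncomputable def binomHarmonicSum (x : ℝ) (n : ℕ) : ℝ :=
  ∑ k ∈ range (n + 1), (n.choose k : ℝ) * (x ^ k * H k)

theorem binomHarmonicSum_succ (x : ℝ) (n : ℕ) :
    binomHarmonicSum x (n + 1)
      = (1 + x) * binomHarmonicSum x n + ((1 + x) ^ (n + 1) - 1) / (n + 1) := by
  rw [binomHarmonicSum, sum_range_succ_choose_mul, ← mul_sum_range_choose_mul_pow_div_succ,
    binomHarmonicSum, mul_sum, mul_sum, ← sum_add_distrib]
  refine sum_congr rfl fun k _ => ?_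
  rw [H_succ]
  ring

theorem sum_range_pow_mul_choose_mul_mul_H (x : ℝ) (n : ℕ) :
    ∑ k ∈ range (n + 2), x ^ k * ((n + 1).choose k : ℝ) * k * H k
      = (n + 1) * (binomHarmonicSum x (n + 1) - binomHarmonicSum x n) := by
  have hcomm : ∑ k ∈ range (n + 2), x ^ k * ((n + 1).choose k : ℝ) * k * H k
      = ∑ k ∈ range (n + 2), ((n + 1).choose k : ℝ) * k * (x ^ k * H k) :=
    sum_congr rfl fun k _ => by ring
  rw [hcomm, sum_range_succ_choose_mul_cast_mul, binomHarmonicSum, sum_range_succ_choose_mul,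
    binomHarmonicSum, ← sum_sub_distrib]
  simp only [mul_add, add_sub_cancel_left]

theorem binomHarmonicSum_neg_two_two_mul (m : ℕ) :
    binomHarmonicSum (-2) (2 * m) = 2 * H (2 * m) - H m := by
  induction m with
  | zero => simp [binomHarmonicSum, H]
  | succ m ih =>
    rw [show 2 * (m + 1) = 2 * m + 1 + 1 by ring, binomHarmonicSum_succ, binomHarmonicSum_succ, ih]
    simp only [H_succ]
    norm_num [pow_succ, pow_mul]
    field_simp
    ring

theorem stmt4 (m : ℕ) :
    ∑ k ∈ Finset.range (2*m+1), (-2:ℝ)^k * ((2*m).choose k : ℝ) * (k:ℝ) * H k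
      = 4 * (m:ℝ) * (2 * H (2*m) - H m) := by
  obtain _ | m := m
  · simp
  have hodd : binomHarmonicSum (-2) (2 * m + 1) = -binomHarmonicSum (-2) (2 * (m + 1)) := by
    rw [show 2 * (m + 1) = 2 * m + 1 + 1 by ring, binomHarmonicSum_succ _ (2 * m + 1)]
    norm_num [pow_succ, pow_mul]
  have hsum := sum_range_pow_mul_choose_mul_mul_H (-2) (2 * m + 1)
  rw [show 2 * m + 1 + 2 = 2 * (m + 1) + 1 by ring, show 2 * m + 1 + 1 = 2 * (m + 1) by ring, hodd,
    binomHarmonicSum_neg_two_two_mul] at hsum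
  rw [hsum]
  push_cast
  ring
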